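/- Fix μ > c, σ > 0, τ > 0 and q ∈ ℝ with q ≤ c. Then F(t, τ, q; μ, σ, c) tends to 0 as t tends to +∞; i.e., an agent whose true quality is at most the link cost is ostracized almost surely. -/

import Mathlib

open Real MeasureTheory Filter Topology

/-- Standard normal density φ(x) = exp(-x²/2)/√(2π). -/
noncomputable def stdPdf (x : ℝ) : ℝ := Real.exp (-(x ^ 2) / 2) / Real.sqrt (2 * Real.pi)

/-- Standard normal CDF Φ(x) = ∫_{-∞}^x φ(u) du. -/
noncomputable def stdCdf (x : ℝ) : ℝ := ∫ u in Set.Iio x, stdPdf u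

/-- Survival probability F(t, τ, q; μ, σ, c): the probability that the agent's
reputation does not hit the cost c before time t, given true quality q. -/
noncomputable def survF (t τ q μ σ c : ℝ) : ℝ :=
  stdCdf (Real.sqrt (t * τ) * (q - c) + (μ - c) / (σ ^ 2 * Real.sqrt (t * τ)))
    - Real.exp (-(2 / σ ^ 2) * (μ - c) * (q - c)) *
      stdCdf (Real.sqrt (t * τ) * (q - c) - (μ - c) / (σ ^ 2 * Real.sqrt (t * τ)))

/-!
Write `s = √(tτ)`, `a = q - c ≤ 0` and `b = (μ - c)/σ²`, so that
`F = Φ(s a + b/s) - exp(-2ab) Φ(s a - b/s)` with `s → ∞`. If `a < 0` both arguments of `Φ` tend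
to `-∞`, so both terms vanish in the limit. If `a = 0` the exponential factor is `1` and
`F = Φ(b/s) - Φ(-b/s) → Φ(0) - Φ(0) = 0` by continuity of `Φ`.
-/

lemma integrable_stdPdf : Integrable stdPdf := by
  refine ((integrable_exp_neg_mul_sq (by norm_num : (0 : ℝ) < 1 / 2)).div_const
    (√(2 * π))).congr (ae_of_all _ fun x => ?_)
  simp only [stdPdf]
  ring_nf

lemma stdCdf_eq_sub (x : ℝ) :
    stdCdf x = (∫ u in Set.Iic 0, stdPdf u) - ∫ u in x..0, stdPdf u := by
  rw [← intervalIntegral.integral_Iic_sub_Iic integrable_stdPdf.integrableOn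
    integrable_stdPdf.integrableOn, sub_sub_cancel, stdCdf, integral_Iic_eq_integral_Iio]

lemma continuous_stdCdf : Continuous stdCdf := by
  simp only [funext stdCdf_eq_sub, intervalIntegral.integral_symm (0 : ℝ), sub_neg_eq_add]
  exact continuous_const.add (integrable_stdPdf.continuous_primitive 0)

lemma tendsto_stdCdf_atBot : Tendsto stdCdf atBot (𝓝 0) := by
  simpa only [funext stdCdf_eq_sub, id_eq, sub_self] using
    (intervalIntegral_tendsto_integral_Iic 0 integrable_stdPdf.integrableOn tendsto_id).const_sub
      (∫ u in Set.Iic 0, stdPdf u)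

lemma tendsto_stdCdf_sub_exp_mul_stdCdf {a : ℝ} (ha : a ≤ 0) (b : ℝ) :
    Tendsto (fun s => stdCdf (s * a + b / s) - exp (-2 * b * a) * stdCdf (s * a - b / s))
      atTop (𝓝 0) := by
  have hb : Tendsto (fun s : ℝ => b / s) atTop (𝓝 0) := tendsto_const_nhds.div_atTop tendsto_id
  rcases ha.lt_or_eq with ha | rfl
  · have hsa : Tendsto (fun s : ℝ => s * a) atTop atBot := tendsto_id.atTop_mul_const_of_neg ha
    have hplus : Tendsto (fun s => stdCdf (s * a + b / s)) atTop (𝓝 0) :=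
      tendsto_stdCdf_atBot.comp (hsa.atBot_add hb)
    have hminus : Tendsto (fun s => stdCdf (s * a - b / s)) atTop (𝓝 0) := by
      simpa only [sub_eq_add_neg, Function.comp_def] using
        tendsto_stdCdf_atBot.comp (hsa.atBot_add hb.neg)
    simpa only [mul_zero, sub_zero] using hplus.sub (hminus.const_mul (exp (-2 * b * a)))
  · have hΦ (f : ℝ → ℝ) (hf : Tendsto f atTop (𝓝 0)) :
        Tendsto (fun s => stdCdf (f s)) atTop (𝓝 (stdCdf 0)) :=
      (continuous_stdCdf.tendsto 0).comp hf
    simpa only [mul_zero, zero_add, zero_sub, exp_zero, one_mul, sub_self] using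
      (hΦ _ hb).sub (hΦ _ (by simpa only [neg_zero] using hb.neg))

theorem stmt_9_general (μ σ c τ q : ℝ) (hτ : 0 < τ) (hq : q ≤ c) :
    Tendsto (fun t : ℝ => survF t τ q μ σ c) atTop (𝓝 0) := by
  have hs : Tendsto (fun t : ℝ => √(t * τ)) atTop atTop :=
    tendsto_sqrt_atTop.comp (tendsto_id.atTop_mul_const hτ)
  convert (tendsto_stdCdf_sub_exp_mul_stdCdf (sub_nonpos.mpr hq) ((μ - c) / σ ^ 2)).comp hs
    using 2 with t
  simp only [survF, Function.comp_apply, div_mul_eq_div_div]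
  ring_nf

/-- for μ > c and q ≤ c, F(t, τ, q; μ, σ, c) → 0 as t → ∞. -/
theorem stmt_9 (μ σ c τ q : ℝ) (hμ : μ > c) (hσ : 0 < σ) (hτ : 0 < τ) (hq : q ≤ c) :
    Tendsto (fun t : ℝ => survF t τ q μ σ c) atTop (𝓝 0) :=
  stmt_9_general μ σ c τ q hτ hq
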